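/- arXiv:2601.18189 — 3 statements merged into one kernel-verified Lean document; each statement's English description precedes it below -/
import Mathlib

section
/- Let d ≥ 1 and let A be a d×d real matrix with all entries nonnegative. Then trace(exp(A)) ≥ d, and trace(exp(A)) = d if and only if A is nilpotent. -/
open Matrix

section Aux

variable {d : ℕ} {A : Matrix (Fin d) (Fin d) ℝ}

/-- entries of powers of a nonnegative matrix are nonnegative -/
lemma stmt0_pow_entry_nonneg (hA : ∀ i j, 0 ≤ A i j) (n : ℕ) :
    ∀ i j, 0 ≤ (A ^ n) i j := by
  induction n with
  | zero => intro i j; simp [Matrix.one_apply]; split <;> norm_num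
  | succ n ih =>
      intro i j
      rw [pow_succ, Matrix.mul_apply]
      exact Finset.sum_nonneg fun l _ => mul_nonneg (ih i l) (hA l j)

/-- extract a "path" from a positive entry of a power -/
lemma stmt0_exists_path (hA : ∀ i j, 0 ≤ A i j) :
    ∀ (n : ℕ) (i j : Fin d), 0 < (A ^ n) i j →
      ∃ p : ℕ → Fin d, p 0 = i ∧ p n = j ∧
        ∀ a b, a ≤ b → b ≤ n → 0 < (A ^ (b - a)) (p a) (p b) := by
  intro n
  induction n with
  | zero =>
      intro i j h
      have hij : i = j := by
        by_contra hne
        rw [pow_zero, Matrix.one_apply_ne hne] at h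
        exact lt_irrefl 0 h
      refine ⟨fun _ => i, rfl, hij.symm ▸ rfl, ?_⟩
      intro a b hab hb
      interval_cases b
      interval_cases a
      simp [Matrix.one_apply]
  | succ n ih =>
      intro i j h
      rw [pow_succ, Matrix.mul_apply] at h
      obtain ⟨l, -, hl⟩ : ∃ l ∈ Finset.univ, 0 < (A ^ n) i l * A l j := by
        by_contra hc
        push_neg at hc
        have : ∑ l, (A ^ n) i l * A l j ≤ 0 :=
          Finset.sum_nonpos fun l hl => hc l hl
        linarith
      have h1 : 0 < (A ^ n) i l := by
        rcases (stmt0_pow_entry_nonneg hA n i l).lt_or_eq with h' | h'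
        · exact h'
        · rw [← h'] at hl; simp at hl
      have h2 : 0 < A l j := by
        rcases (hA l j).lt_or_eq with h' | h'
        · exact h'
        · rw [← h'] at hl; simp at hl
      obtain ⟨p, hp0, hpn, hp⟩ := ih i l h1
      refine ⟨fun a => if a ≤ n then p a else j, by simp [hp0], by simp, ?_⟩
      intro a b hab hb
      by_cases hbn : b ≤ n
      · simp only [if_pos (hab.trans hbn), if_pos hbn]
        exact hp a b hab hbn
      · have hb1 : b = n + 1 := le_antisymm hb (not_le.mp hbn)
        subst hb1
        simp only [if_neg hbn]
        by_cases han : a ≤ n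
        · simp only [if_pos han]
          have hstep : n + 1 - a = (n - a) + 1 := by omega
          rw [hstep, pow_succ, Matrix.mul_apply]
          have hterm : 0 < (A ^ (n - a)) (p a) l * A l j :=
            mul_pos (hpn ▸ hp a n han le_rfl) h2
          have : (A ^ (n - a)) (p a) l * A l j ≤
              ∑ x, (A ^ (n - a)) (p a) x * A x j := by
            apply Finset.single_le_sum (f := fun x => (A ^ (n - a)) (p a) x * A x j)
              (fun x _ => mul_nonneg (stmt0_pow_entry_nonneg hA _ _ _) (hA x j))
              (Finset.mem_univ l)
          linarith
        · have : a = n + 1 := by omega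
          subst this
          simp [Matrix.one_apply]

/-- if all traces of positive powers vanish, a nonnegative matrix is nilpotent -/
lemma stmt0_nilpotent_of_traces (hA : ∀ i j, 0 ≤ A i j)
    (ht : ∀ k, 1 ≤ k → (A ^ k).trace = 0) : IsNilpotent A := by
  refine ⟨d, ?_⟩
  have diagzero : ∀ (k : ℕ), 1 ≤ k → ∀ i, (A ^ k) i i = 0 := by
    intro k hk i
    have := ht k hk
    rw [Matrix.trace] at this
    have h0 := (Finset.sum_eq_zero_iff_of_nonneg
      (fun l _ => stmt0_pow_entry_nonneg hA k l l)).mp this i (Finset.mem_univ i)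
    simpa [Matrix.diag] using h0
  ext i j
  simp only [Matrix.zero_apply]
  rcases (stmt0_pow_entry_nonneg hA d i j).lt_or_eq with h | h
  · exfalso
    obtain ⟨p, -, -, hp⟩ := stmt0_exists_path hA d i j h
    obtain ⟨x, y, hxy, hpxy⟩ := Fintype.exists_ne_map_eq_of_card_lt
      (fun x : Fin (d + 1) => p x) (by simp)
    rcases Ne.lt_or_gt hxy with hlt | hlt
    · have := hp x y (le_of_lt hlt) (Nat.lt_succ_iff.mp y.isLt)
      rw [hpxy] at this
      rw [diagzero (↑y - ↑x) (by omega) (p y)] at this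
      exact lt_irrefl 0 this
    · have := hp y x (le_of_lt hlt) (Nat.lt_succ_iff.mp x.isLt)
      rw [← hpxy] at this
      rw [diagzero (↑x - ↑y) (by omega) (p ↑x)] at this
      exact lt_irrefl 0 this
  · exact h.symm

/-- trace of the exponential as a sum -/
lemma stmt0_hasSum_trace_exp (A : Matrix (Fin d) (Fin d) ℝ) :
    HasSum (fun n : ℕ => ((n.factorial : ℝ)⁻¹) * (A ^ n).trace)
      ((NormedSpace.exp A).trace) := by
  letI : SeminormedRing (Matrix (Fin d) (Fin d) ℝ) := Matrix.linftyOpSemiNormedRing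
  letI : NormedRing (Matrix (Fin d) (Fin d) ℝ) := Matrix.linftyOpNormedRing
  letI : NormedAlgebra ℝ (Matrix (Fin d) (Fin d) ℝ) := Matrix.linftyOpNormedAlgebra
  have hs : HasSum (fun n : ℕ => ((n.factorial : ℝ)⁻¹) • A ^ n) (NormedSpace.exp A) :=
    NormedSpace.exp_series_hasSum_exp' A
  have := hs.mapL (LinearMap.toContinuousLinearMap (Matrix.traceLinearMap (Fin d) ℝ ℝ))
  simpa [smul_eq_mul] using this

end Aux

/-- For a `d × d` real matrix `A` (`d ≥ 1`) with nonnegative entries,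
`trace (exp A) ≥ d`, with equality iff `A` is nilpotent. -/
theorem stmt_0 (d : ℕ) (hd : 1 ≤ d) (A : Matrix (Fin d) (Fin d) ℝ)
    (hA : ∀ i j, 0 ≤ A i j) :
    (d : ℝ) ≤ (NormedSpace.exp A).trace ∧
      ((NormedSpace.exp A).trace = (d : ℝ) ↔ IsNilpotent A) := by
  set f : ℕ → ℝ := fun n => ((n.factorial : ℝ)⁻¹) * (A ^ n).trace with hf
  have hsum : HasSum f ((NormedSpace.exp A).trace) := stmt0_hasSum_trace_exp A
  have hf0 : f 0 = (d : ℝ) := by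
    simp [hf, Matrix.trace_one]
  have hfnn : ∀ n, 0 ≤ f n := by
    intro n
    apply mul_nonneg (by positivity)
    exact Finset.sum_nonneg fun i _ => stmt0_pow_entry_nonneg hA n i i
  have hle : (d : ℝ) ≤ (NormedSpace.exp A).trace := by
    rw [← hf0]
    exact le_hasSum hsum 0 fun n _ => hfnn n
  refine ⟨hle, ?_, ?_⟩
  · -- equality → nilpotent
    intro heq
    have htail : HasSum (fun n => f (n + 1)) 0 := by
      have := (hasSum_nat_add_iff' 1).mpr hsum
      simpa [heq, hf0] using this
    have hzero : ∀ n : ℕ, f (n + 1) = 0 := by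
      have := (hasSum_zero_iff_of_nonneg fun n => hfnn (n + 1)).mp htail
      intro n; exact congrFun this n
    apply stmt0_nilpotent_of_traces hA
    intro k hk
    obtain ⟨n, rfl⟩ : ∃ n, k = n + 1 := ⟨k - 1, by omega⟩
    have := hzero n
    have hne : ((n + 1).factorial : ℝ)⁻¹ ≠ 0 := by positivity
    simp only [hf, mul_eq_zero, hne, false_or] at this
    exact this
  · -- nilpotent → equality
    rintro ⟨m, hm⟩
    have hzero : ∀ n : ℕ, n ≠ 0 → f n = 0 := by
      intro n hn
      have hnil : IsNilpotent (A ^ n) := ⟨m, by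
        rw [← pow_mul]
        rcases Nat.exists_eq_succ_of_ne_zero hn with ⟨k, rfl⟩
        have : (k + 1) * m = m + k * m := by ring
        rw [this, pow_add, hm, zero_mul]⟩
      have := Matrix.isNilpotent_trace_of_isNilpotent hnil
      rw [hf]
      simp [this.eq_zero]
    have h2 : HasSum f (f 0) := hasSum_single 0 fun n hn => hzero n hn
    rw [← hf0]
    exact hsum.unique h2
end

section
/- Refined Incompatibility Theorem: Let d ≥ 1 and let F be a real-valued function on d×d real matrices that is differentiable on a neighborhood of the zero matrix with its Fréchet derivative bounded on some neighborhood of 0 (e.g. F is C¹ at 0). Define h(W) = F(W ∘ W), where ∘ is the entrywise (Hadamard) product. Then the Fréchet derivative of h satisfies ‖Dh(W)‖ ≤ 2 K ‖W‖ near 0 for some constant K, and in particular ‖Dh(W)‖ → 0 as W → 0; consequently for every fixed nonzero matrix U, lim_{δ→0⁺} ‖Dh(δ·U)‖ = 0, so h violates the L₁-Synergy axiom (Axiom 2), which requires liminf_{δ→0⁺} ‖∇h(δ·U)‖ > 0. -/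
open Matrix Filter Topology

attribute [local instance] Matrix.frobeniusNormedAddCommGroup Matrix.frobeniusNormedSpace

lemma hadamard_norm_le {d : ℕ} (W H : Matrix (Fin d) (Fin d) ℝ) :
    ‖Matrix.hadamard W H‖ ≤ ‖W‖ * ‖H‖ := by
  rw [Matrix.frobenius_norm_def, Matrix.frobenius_norm_def, Matrix.frobenius_norm_def,
    ← Real.mul_rpow (by positivity) (by positivity)]
  refine Real.rpow_le_rpow (by positivity) ?_ (by norm_num)
  have hB : ∀ i j : Fin d, ‖H i j‖ ^ (2:ℝ) ≤ ∑ i, ∑ j, ‖H i j‖ ^ (2:ℝ) := by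
    intro i j
    refine le_trans ?_ (Finset.single_le_sum (f := fun i => ∑ j, ‖H i j‖ ^ (2:ℝ))
      (fun i _ => by positivity) (Finset.mem_univ i))
    exact Finset.single_le_sum (f := fun j => ‖H i j‖ ^ (2:ℝ))
      (fun j _ => by positivity) (Finset.mem_univ j)
  calc ∑ i, ∑ j, ‖Matrix.hadamard W H i j‖ ^ (2:ℝ)
      ≤ ∑ i, ∑ j, ‖W i j‖ ^ (2:ℝ) * (∑ i, ∑ j, ‖H i j‖ ^ (2:ℝ)) := by
        refine Finset.sum_le_sum fun i _ => Finset.sum_le_sum fun j _ => ?_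
        rw [Matrix.hadamard_apply, norm_mul,
          Real.mul_rpow (norm_nonneg _) (norm_nonneg _)]
        exact mul_le_mul_of_nonneg_left (hB i j) (by positivity)
    _ = (∑ i, ∑ j, ‖W i j‖ ^ (2:ℝ)) * (∑ i, ∑ j, ‖H i j‖ ^ (2:ℝ)) := by
        simp_rw [← Finset.sum_mul]

lemma hadamard_isBoundedBilinear {d : ℕ} :
    IsBoundedBilinearMap ℝ (fun p : Matrix (Fin d) (Fin d) ℝ × Matrix (Fin d) (Fin d) ℝ =>
      Matrix.hadamard p.1 p.2) where
  add_left := fun x y z => by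
    ext i j; simp [Matrix.hadamard_apply, add_mul]
  smul_left := fun c x y => by
    ext i j; simp [Matrix.hadamard_apply, mul_assoc]
  add_right := fun x y z => by
    ext i j; simp [Matrix.hadamard_apply, mul_add]
  smul_right := fun c x y => by
    ext i j; simp [Matrix.hadamard_apply, mul_assoc, mul_left_comm]
  bound := ⟨1, one_pos, fun x y => by simpa using hadamard_norm_le x y⟩

/-- Refined Incompatibility Theorem: if `F` is differentiable on a neighborhood
of `0` with Fréchet derivative bounded near `0`, then `h W = F (W ∘ W)` has
`‖Dh W‖ ≤ 2 K ‖W‖` near `0` for some `K`, hence `‖Dh W‖ → 0` as `W → 0`, and in particular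
for every nonzero `U`, `‖Dh (δ • U)‖ → 0` as `δ → 0⁺` (violating the L₁-Synergy axiom). -/
theorem stmt_2 (d : ℕ) (hd : 1 ≤ d)
    (F : Matrix (Fin d) (Fin d) ℝ → ℝ)
    (s : Set (Matrix (Fin d) (Fin d) ℝ)) (hs : s ∈ 𝓝 (0 : Matrix (Fin d) (Fin d) ℝ))
    (hFdiff : ∀ W ∈ s, DifferentiableAt ℝ F W)
    (C : ℝ) (hFbdd : ∀ W ∈ s, ‖@fderiv ℝ _ _ _ _ PseudoMetricSpace.toUniformSpace.toTopologicalSpace _ _ _ _ F W‖ ≤ C)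
    (h : Matrix (Fin d) (Fin d) ℝ → ℝ)
    (hdef : ∀ W, h W = F (Matrix.hadamard W W)) :
    (∃ K : ℝ, ∀ᶠ W in 𝓝 (0 : Matrix (Fin d) (Fin d) ℝ), ‖@fderiv ℝ _ _ _ _ PseudoMetricSpace.toUniformSpace.toTopologicalSpace _ _ _ _ h W‖ ≤ 2 * K * ‖W‖) ∧
    Tendsto (fun W : Matrix (Fin d) (Fin d) ℝ => ‖@fderiv ℝ _ _ _ _ PseudoMetricSpace.toUniformSpace.toTopologicalSpace _ _ _ _ h W‖) (𝓝 0) (𝓝 0) ∧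
    ∀ U : Matrix (Fin d) (Fin d) ℝ, U ≠ 0 →
      Tendsto (fun δ : ℝ => ‖@fderiv ℝ _ _ _ _ PseudoMetricSpace.toUniformSpace.toTopologicalSpace _ _ _ _ h (δ • U)‖) (𝓝[>] 0) (𝓝 0) := by
  letI : TopologicalSpace (Matrix (Fin d) (Fin d) ℝ) := PseudoMetricSpace.toUniformSpace.toTopologicalSpace
  have hbb := hadamard_isBoundedBilinear (d := d)
  -- derivative of the square map
  have hsq : ∀ W : (Matrix (Fin d) (Fin d) ℝ), HasFDerivAt (fun W : (Matrix (Fin d) (Fin d) ℝ) => Matrix.hadamard W W)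
      ((hbb.deriv (W, W)).comp ((ContinuousLinearMap.id ℝ (Matrix (Fin d) (Fin d) ℝ)).prod (ContinuousLinearMap.id ℝ (Matrix (Fin d) (Fin d) ℝ))))
      W := by
    intro W
    have hdiag : HasFDerivAt (fun x : Matrix (Fin d) (Fin d) ℝ => (x, x))
        ((ContinuousLinearMap.id ℝ (Matrix (Fin d) (Fin d) ℝ)).prod
          (ContinuousLinearMap.id ℝ (Matrix (Fin d) (Fin d) ℝ))) W :=
      (hasFDerivAt_id W).prodMk (hasFDerivAt_id W)
    exact HasFDerivAt.comp (f := fun x : Matrix (Fin d) (Fin d) ℝ => (x, x)) W (hbb.hasFDerivAt (W, W)) hdiag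
  -- continuity of the square map
  have hsqcont : Continuous (fun W : (Matrix (Fin d) (Fin d) ℝ) => Matrix.hadamard W W) :=
    continuous_iff_continuousAt.2 fun W => (hsq W).differentiableAt.continuousAt
  have hsq0 : Matrix.hadamard (0 : (Matrix (Fin d) (Fin d) ℝ)) 0 = 0 := Matrix.zero_hadamard 0
  have hmem : ∀ᶠ W : (Matrix (Fin d) (Fin d) ℝ) in 𝓝 0, Matrix.hadamard W W ∈ s := by
    have : Tendsto (fun W : (Matrix (Fin d) (Fin d) ℝ) => Matrix.hadamard W W) (𝓝 0) (𝓝 0) := by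
      simpa [hsq0] using (hsqcont.tendsto 0)
    exact this hs
  -- the key bound
  have key : ∀ᶠ W : (Matrix (Fin d) (Fin d) ℝ) in 𝓝 0, ‖@fderiv ℝ _ _ _ _ PseudoMetricSpace.toUniformSpace.toTopologicalSpace _ _ _ _ h W‖ ≤ 2 * C * ‖W‖ := by
    filter_upwards [hmem] with W hW
    have hF : HasFDerivAt F (fderiv ℝ F (Matrix.hadamard W W)) (Matrix.hadamard W W) :=
      (hFdiff _ hW).hasFDerivAt
    have hcomp : HasFDerivAt h
        ((fderiv ℝ F (Matrix.hadamard W W)).comp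
          ((hbb.deriv (W, W)).comp
            ((ContinuousLinearMap.id ℝ (Matrix (Fin d) (Fin d) ℝ)).prod (ContinuousLinearMap.id ℝ (Matrix (Fin d) (Fin d) ℝ))))) W := by
      refine (HasFDerivAt.comp (g := F) (f := fun W : Matrix (Fin d) (Fin d) ℝ => Matrix.hadamard W W) W hF (hsq W)).congr_of_eventuallyEq ?_
      exact Eventually.of_forall fun W => hdef W
    rw [show @fderiv ℝ _ _ _ _ PseudoMetricSpace.toUniformSpace.toTopologicalSpace _ _ _ _ h W = _ from hcomp.fderiv]
    have hDnorm : ‖(hbb.deriv (W, W)).comp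
        ((ContinuousLinearMap.id ℝ (Matrix (Fin d) (Fin d) ℝ)).prod (ContinuousLinearMap.id ℝ (Matrix (Fin d) (Fin d) ℝ)))‖ ≤ 2 * ‖W‖ := by
      refine ContinuousLinearMap.opNorm_le_bound _ (by positivity) fun H => ?_
      have : (hbb.deriv (W, W)).comp
          ((ContinuousLinearMap.id ℝ (Matrix (Fin d) (Fin d) ℝ)).prod (ContinuousLinearMap.id ℝ (Matrix (Fin d) (Fin d) ℝ))) H
          = Matrix.hadamard W H + Matrix.hadamard H W := by
        simp [ContinuousLinearMap.comp_apply, ContinuousLinearMap.prod_apply,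
          hbb.deriv_apply]
      rw [this]
      calc ‖Matrix.hadamard W H + Matrix.hadamard H W‖
          ≤ ‖Matrix.hadamard W H‖ + ‖Matrix.hadamard H W‖ := norm_add_le _ _
        _ ≤ ‖W‖ * ‖H‖ + ‖H‖ * ‖W‖ := add_le_add (hadamard_norm_le W H) (hadamard_norm_le H W)
        _ = 2 * ‖W‖ * ‖H‖ := by ring
    have hC0 : (0:ℝ) ≤ C := le_trans (norm_nonneg _) (hFbdd _ hW)
    calc ‖(fderiv ℝ F (Matrix.hadamard W W)).comp _‖
        ≤ ‖fderiv ℝ F (Matrix.hadamard W W)‖ *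
          ‖(hbb.deriv (W, W)).comp
            ((ContinuousLinearMap.id ℝ (Matrix (Fin d) (Fin d) ℝ)).prod (ContinuousLinearMap.id ℝ (Matrix (Fin d) (Fin d) ℝ)))‖ :=
          ContinuousLinearMap.opNorm_comp_le _ _
      _ ≤ C * (2 * ‖W‖) :=
          mul_le_mul (hFbdd _ hW) hDnorm (norm_nonneg _) hC0
      _ = 2 * C * ‖W‖ := by ring
  refine ⟨⟨C, key⟩, ?_, ?_⟩
  · -- squeeze
    have hg : Tendsto (fun W : (Matrix (Fin d) (Fin d) ℝ) => 2 * C * ‖W‖) (𝓝 0) (𝓝 0) := by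
      have := (tendsto_norm_zero (E := (Matrix (Fin d) (Fin d) ℝ))).const_mul (2 * C)
      simp only [mul_zero] at this; exact this
    exact squeeze_zero' (Eventually.of_forall fun _ => norm_nonneg _) key hg
  · intro U hU
    have h1 : Tendsto (fun δ : ℝ => δ • U) (𝓝[>] 0) (𝓝 0) := by
      have : Tendsto (fun δ : ℝ => δ • U) (𝓝 0) (𝓝 ((0:ℝ) • U)) :=
        ((continuous_id.smul continuous_const).tendsto 0)
      simpa using this.mono_left nhdsWithin_le_nhds
    have h2 : Tendsto (fun W : (Matrix (Fin d) (Fin d) ℝ) => ‖@fderiv ℝ _ _ _ _ PseudoMetricSpace.toUniformSpace.toTopologicalSpace _ _ _ _ h W‖) (𝓝 0) (𝓝 0) := by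
      have hg : Tendsto (fun W : (Matrix (Fin d) (Fin d) ℝ) => 2 * C * ‖W‖) (𝓝 0) (𝓝 0) := by
        have := (tendsto_norm_zero (E := (Matrix (Fin d) (Fin d) ℝ))).const_mul (2 * C)
        simp only [mul_zero] at this; exact this
      exact squeeze_zero' (Eventually.of_forall fun _ => norm_nonneg _) key hg
    exact h2.comp h1
end

section
/- Value boundedness of S-AHOC: Fix d ≥ 1 and α ∈ [0,1), and for a d×d real matrix W define the hybrid-order core M(W) with entries M(W)_{ij} = α W_{ij}² + (1−α)|W_{ij}|, and the S-AHOC constraint h(W) = trace(exp(M(W) / (‖M(W)‖_F + 1))) − d, with ‖·‖_F the Frobenius norm. Then for every W, 0 ≤ h(W) ≤ √d · (e − 1). -/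
open Matrix

attribute [local instance] Matrix.frobeniusNormedAddCommGroup Matrix.frobeniusNormedSpace

/-- The hybrid-order core `M(W)_{ij} = α W_{ij}² + (1−α) |W_{ij}|`. -/
noncomputable def hybridCore {d : ℕ} (α : ℝ) (W : Matrix (Fin d) (Fin d) ℝ) :
    Matrix (Fin d) (Fin d) ℝ :=
  Matrix.of fun i j => α * (W i j) ^ 2 + (1 - α) * |W i j|

/-- The S-AHOC constraint `h(W) = trace (exp (M(W) / (‖M(W)‖_F + 1))) − d`,
with `‖·‖` the Frobenius norm (local instance). -/
noncomputable def hSAHOC (d : ℕ) (α : ℝ) (W : Matrix (Fin d) (Fin d) ℝ) : ℝ :=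
  (NormedSpace.exp ((‖hybridCore α W‖ + 1)⁻¹ • hybridCore α W)).trace - d

attribute [local instance] Matrix.frobeniusNormedRing Matrix.frobeniusNormedAlgebra

/-- Powers of an entrywise-nonnegative matrix are entrywise nonnegative. -/
lemma pow_entry_nonneg {d : ℕ} (A : Matrix (Fin d) (Fin d) ℝ)
    (hA : ∀ i j, 0 ≤ A i j) (n : ℕ) : ∀ i j, 0 ≤ (A ^ n) i j := by
  induction n with
  | zero =>
    intro i j
    simp only [pow_zero]
    by_cases h : i = j <;> simp [Matrix.one_apply, h]
  | succ n ih =>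
    intro i j
    rw [pow_succ, Matrix.mul_apply]
    exact Finset.sum_nonneg fun k _ => mul_nonneg (ih i k) (hA k j)

/-- Frobenius norm squared is the sum of squares of entries. -/
lemma frobenius_sq {d : ℕ} (B : Matrix (Fin d) (Fin d) ℝ) :
    ‖B‖ ^ 2 = ∑ i, ∑ j, (B i j) ^ 2 := by
  rw [Matrix.frobenius_norm_def]
  rw [← Real.rpow_natCast ((∑ i, ∑ j, ‖B i j‖ ^ (2 : ℝ)) ^ (1 / 2 : ℝ)) 2]
  rw [← Real.rpow_mul (by positivity)]
  norm_num


/-- The trace is at most `√d` times the Frobenius norm. -/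
lemma trace_le_sqrt_mul_norm {d : ℕ} (B : Matrix (Fin d) (Fin d) ℝ) :
    B.trace ≤ Real.sqrt d * ‖B‖ := by
  have h1 : (B.trace) ^ 2 ≤ d * ‖B‖ ^ 2 := by
    rw [frobenius_sq]
    have h2 : (∑ i, B i i) ^ 2 ≤ (Finset.univ : Finset (Fin d)).card * ∑ i, (B i i) ^ 2 :=
      sq_sum_le_card_mul_sum_sq
    simp only [Finset.card_univ, Fintype.card_fin] at h2
    refine le_trans (by simpa [Matrix.trace] using h2) ?_
    apply mul_le_mul_of_nonneg_left _ (Nat.cast_nonneg d)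
    apply Finset.sum_le_sum
    intro i _
    exact Finset.single_le_sum (f := fun j => (B i j) ^ 2) (fun j _ => sq_nonneg _)
      (Finset.mem_univ i)
  calc B.trace ≤ |B.trace| := le_abs_self _
    _ = Real.sqrt (B.trace ^ 2) := (Real.sqrt_sq_eq_abs _).symm
    _ ≤ Real.sqrt (d * ‖B‖ ^ 2) := Real.sqrt_le_sqrt h1
    _ = Real.sqrt d * ‖B‖ := by
        rw [Real.sqrt_mul (Nat.cast_nonneg d), Real.sqrt_sq (norm_nonneg _)]

open Nat in
lemma tsum_factorial_inv : ∑' n : ℕ, ((n ! : ℝ))⁻¹ = Real.exp 1 := by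
  rw [Real.exp_eq_exp_ℝ, NormedSpace.exp_eq_tsum (𝕂 := ℝ)]
  simp [smul_eq_mul]

open Nat in
lemma summable_factorial_inv : Summable (fun n : ℕ => ((n ! : ℝ))⁻¹) := by
  have := Real.summable_pow_div_factorial 1
  simpa [div_eq_mul_inv] using this

open Nat

/-- Value boundedness of S-AHOC: for `d ≥ 1` and `α ∈ [0,1)`,
`0 ≤ h(W) ≤ √d * (e − 1)` for every `W`. -/
theorem stmt_5 (d : ℕ) (hd : 1 ≤ d) (α : ℝ) (hα0 : 0 ≤ α) (hα1 : α < 1)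
    (W : Matrix (Fin d) (Fin d) ℝ) :
    0 ≤ hSAHOC d α W ∧ hSAHOC d α W ≤ Real.sqrt d * (Real.exp 1 - 1) := by
  set M := hybridCore α W with hM
  have hMnn : ∀ i j, 0 ≤ M i j := by
    intro i j
    have : 0 ≤ 1 - α := by linarith
    simp only [hM, hybridCore, Matrix.of_apply]
    positivity
  have hden : (0 : ℝ) < ‖M‖ + 1 := by positivity
  set A := (‖M‖ + 1)⁻¹ • M with hA
  have hAnn : ∀ i j, 0 ≤ A i j := by
    intro i j
    simp only [hA, Matrix.smul_apply, smul_eq_mul]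
    exact mul_nonneg (inv_nonneg.2 hden.le) (hMnn i j)
  have hAle : ‖A‖ ≤ 1 := by
    rw [hA, norm_smul, Real.norm_eq_abs, abs_of_nonneg (inv_nonneg.2 hden.le)]
    rw [inv_mul_le_iff₀ hden]
    linarith
  -- summability of the exponential series
  have hsum : Summable (fun n : ℕ => ((n ! : ℝ))⁻¹ • A ^ n) :=
    NormedSpace.expSeries_summable' (𝕂 := ℝ) A
  -- push trace through the tsum
  let T : Matrix (Fin d) (Fin d) ℝ →L[ℝ] ℝ :=
    LinearMap.toContinuousLinearMap (Matrix.traceLinearMap (Fin d) ℝ ℝ)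
  have hT : ∀ B : Matrix (Fin d) (Fin d) ℝ, T B = B.trace := fun _ => rfl
  have htrace : (NormedSpace.exp A).trace = ∑' n : ℕ, ((n ! : ℝ))⁻¹ * (A ^ n).trace := by
    rw [NormedSpace.exp_eq_tsum (𝕂 := ℝ)]
    have := T.map_tsum hsum
    simp only [hT, Matrix.trace_smul, smul_eq_mul] at this
    exact this
  set f : ℕ → ℝ := fun n => ((n ! : ℝ))⁻¹ * (A ^ n).trace with hf
  have hfsum : Summable f := by
    refine (hsum.map T T.continuous).congr fun n => ?_
    simp [hf, hT, Matrix.trace_smul, smul_eq_mul, Function.comp]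
  have hf0 : f 0 = d := by
    simp [hf, Matrix.trace_one]
  have hfnn : ∀ n, 0 ≤ f n := by
    intro n
    refine mul_nonneg (by positivity) ?_
    exact Finset.sum_nonneg fun i _ => pow_entry_nonneg A hAnn n i i
  have hsplit : ∑' n : ℕ, f n = f 0 + ∑' n : ℕ, f (n + 1) := hfsum.tsum_eq_zero_add
  have hrest : hSAHOC d α W = ∑' n : ℕ, f (n + 1) := by
    rw [hSAHOC, ← hM, ← hA, htrace, hsplit, hf0]
    ring
  constructor
  · rw [hrest]
    exact tsum_nonneg fun n => hfnn (n + 1)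
  · rw [hrest]
    -- f (n+1) ≤ √d * ((n+1)!)⁻¹
    have hbound : ∀ n : ℕ, f (n + 1) ≤ Real.sqrt d * (((n + 1)! : ℝ))⁻¹ := by
      intro n
      have h1 : (A ^ (n + 1)).trace ≤ Real.sqrt d * ‖A ^ (n + 1)‖ :=
        trace_le_sqrt_mul_norm _
      have h2 : ‖A ^ (n + 1)‖ ≤ ‖A‖ ^ (n + 1) := norm_pow_le' A n.succ_pos
      have h3 : ‖A‖ ^ (n + 1) ≤ 1 := pow_le_one₀ (norm_nonneg _) hAle
      have h4 : (A ^ (n + 1)).trace ≤ Real.sqrt d := by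
        calc (A ^ (n + 1)).trace ≤ Real.sqrt d * ‖A ^ (n + 1)‖ := h1
          _ ≤ Real.sqrt d * 1 := by
              refine mul_le_mul_of_nonneg_left ?_ (Real.sqrt_nonneg _)
              exact le_trans h2 h3
          _ = Real.sqrt d := mul_one _
      have h5 : (0 : ℝ) ≤ (((n + 1)! : ℝ))⁻¹ := by positivity
      calc f (n + 1) = (((n + 1)! : ℝ))⁻¹ * (A ^ (n + 1)).trace := rfl
        _ ≤ (((n + 1)! : ℝ))⁻¹ * Real.sqrt d := mul_le_mul_of_nonneg_left h4 h5
        _ = Real.sqrt d * (((n + 1)! : ℝ))⁻¹ := mul_comm _ _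
    have hgsum : Summable (fun n : ℕ => Real.sqrt d * (((n + 1)! : ℝ))⁻¹) := by
      apply Summable.mul_left
      exact (summable_nat_add_iff 1).2 summable_factorial_inv
    have := Summable.tsum_le_tsum hbound ((summable_nat_add_iff 1).2 hfsum) hgsum
    refine le_trans this ?_
    rw [tsum_mul_left]
    apply mul_le_mul_of_nonneg_left _ (Real.sqrt_nonneg _)
    have : (∑' n : ℕ, ((n ! : ℝ))⁻¹) = 1 + ∑' n : ℕ, (((n + 1)! : ℝ))⁻¹ := by
      have := summable_factorial_inv.tsum_eq_zero_add
      simpa using this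
    have he : ∑' n : ℕ, (((n + 1)! : ℝ))⁻¹ = Real.exp 1 - 1 := by
      rw [← tsum_factorial_inv, this]; ring
    rw [he]
end
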